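/- arXiv:1201.5790 — 3 statements merged into one kernel-verified Lean document; each statement's English description precedes it below -/
import Mathlib

section
/- Let G be a perfect graph on vertex set {1,…,n}. Then the Hansen polytope H(G) equals the set { x ∈ ℝ^{n+1} : −1 ≤ −x_0 + 2·Σ_{i∈K} x_i ≤ 1 for every clique K of G (including the empty clique) }. -/
/-- A finset of vertices is stable (independent) in `G` if no two of its elements are adjacent. -/
def IsStable {n : ℕ} (G : SimpleGraph (Fin n)) (I : Finset (Fin n)) : Prop :=
  ∀ ⦃a⦄, a ∈ I → ∀ ⦃b⦄, b ∈ I → ¬ G.Adj a b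

/-- The point `e_0 + ∑_{i ∈ I} e_i ∈ ℝ^{n+1}`. -/
def hansenVert {n : ℕ} (I : Finset (Fin n)) : Fin (n + 1) → ℝ :=
  fun j => Fin.cases 1 (fun i => if i ∈ I then 1 else 0) j

/-- The Hansen polytope of `G`. -/
def hansenPolytope {n : ℕ} (G : SimpleGraph (Fin n)) : Set (Fin (n + 1) → ℝ) :=
  convexHull ℝ
    {x | ∃ I : Finset (Fin n), IsStable G I ∧ (x = hansenVert I ∨ x = -hansenVert I)}

/-- The clique number of a graph, as an element of `ℕ∞`. -/
noncomputable def cliqueNumber {V : Type*} (G : SimpleGraph V) : ℕ∞ :=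
  ⨆ t ∈ {t : Finset V | G.IsClique (↑t : Set V)}, (t.card : ℕ∞)

/-- A graph is perfect if for every induced subgraph the clique number equals
the chromatic number. -/
def IsPerfect {V : Type*} (G : SimpleGraph V) : Prop :=
  ∀ s : Set V, cliqueNumber (G.induce s) = (G.induce s).chromaticNumber

/-!
For perfect `G` the stable set polytope `stab(G)` is cut out by `x ≥ 0` and the clique
inequalities `∑_{i ∈ K} x_i ≤ 1` (Fulkerson, Lovász). For a rational point `y / q` of that
polytope, replace every vertex `i` by a clique of `y i` copies: the new graph has clique number at
most `q` and, by Lovász's replication lemma, can be coloured with that many colours, and its colour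
classes exhibit `y / q` as an average of `q` stable sets. Irrational points follow by closedness.

Now let `x` satisfy the clique inequalities of the Hansen polytope and put `t = (1 + x₀) / 2`.
Writing the tail of `x` as `x⁺ - x⁻`, the inequalities give `x⁺` lies in `t • stab(G)`
and `x⁻` in `(1 - t) • stab(G)`, so `x = t (1, y) + (1 - t) (-(1, z))` with `y, z ∈ stab(G)`.
Conversely every vertex `±(1, χ_I)` satisfies them, since a clique meets a stable set at most once.
-/

open Finset SimpleGraph

namespace SimpleGraph

section Coloring

variable {W : Type*} (H : SimpleGraph W)

open scoped Classical in
noncomputable def cliqueNumOn (S : Finset W) : ℕ :=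
  (S.powerset.filter fun T : Finset W => H.IsClique (T : Set W)).sup card

variable {H}

theorem IsClique.card_le_cliqueNumOn {S T : Finset W} (hTS : T ⊆ S) (hT : H.IsClique (T : Set W)) :
    #T ≤ H.cliqueNumOn S := by
  classical
  exact le_sup (f := card) (mem_filter.2 ⟨mem_powerset.2 hTS, hT⟩)

theorem exists_isClique_card_eq_cliqueNumOn (S : Finset W) :
    ∃ T ⊆ S, H.IsClique (T : Set W) ∧ #T = H.cliqueNumOn S := by
  classical
  have hempty : ∅ ∈ S.powerset.filter fun T : Finset W => H.IsClique (T : Set W) :=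
    mem_filter.2 ⟨empty_mem_powerset S, by rw [coe_empty]; exact isClique_empty⟩
  obtain ⟨T, hT, hTcard⟩ := exists_mem_eq_sup _ ⟨∅, hempty⟩ card
  obtain ⟨hTS, hTc⟩ := mem_filter.1 hT
  exact ⟨T, mem_powerset.1 hTS, hTc, by rw [cliqueNumOn, hTcard]⟩

theorem cliqueNumOn_mono {S S' : Finset W} (h : S' ⊆ S) : H.cliqueNumOn S' ≤ H.cliqueNumOn S := by
  obtain ⟨T, hTS, hT, hTcard⟩ := exists_isClique_card_eq_cliqueNumOn (H := H) S'
  exact hTcard ▸ hT.card_le_cliqueNumOn (hTS.trans h)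

variable (H) in
def IsColoringOn (S : Finset W) (k : ℕ) (c : W → ℕ) : Prop :=
  (∀ w ∈ S, c w < k) ∧ ∀ w ∈ S, ∀ w' ∈ S, H.Adj w w' → c w ≠ c w'

variable [DecidableEq W]

theorem IsColoringOn.extend {S S' : Finset W} {k m : ℕ} {c : W → ℕ} (hc : H.IsColoringOn S' k c)
    (hstable : ∀ u ∈ S \ S', ∀ u' ∈ S \ S', ¬H.Adj u u') (hkm : k < m) :
    H.IsColoringOn S m fun w => if w ∈ S' then c w else k := by
  refine ⟨fun w _ => ?_, fun w hw w' hw' hadj => ?_⟩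
  · beta_reduce
    split_ifs with h
    · exact (hc.1 w h).trans hkm
    · exact hkm
  · have hS' := fun u (hu : u ∈ S) (h : u ∉ S') => mem_sdiff.2 ⟨hu, h⟩
    beta_reduce
    split_ifs with h h' h'
    · exact hc.2 w h w' h' hadj
    · exact (hc.1 w h).ne
    · exact (hc.1 w' h').ne'
    · exact absurd hadj (hstable w (hS' w hw h) w' (hS' w' hw' h'))

/-- Lovász's replication argument. Colour `S \ {w₁}` by induction; if this needs fewer colours
than `S`, give `w₁` a new one. Otherwise the colour class of `w₀` minus `w₀` meets every maximum
clique of `S \ {w₁}`, so removing it lowers the clique number, and together with `w₁` it forms a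
stable set that takes the freed colour. -/
theorem exists_isColoringOn_of_twins {S : Finset W} {w₀ w₁ : W} (h₀ : w₀ ∈ S) (h₁ : w₁ ∈ S)
    (hadj : H.Adj w₀ w₁) (htwin : ∀ u, u ≠ w₀ → u ≠ w₁ → (H.Adj w₀ u ↔ H.Adj w₁ u))
    (ih : ∀ S' ⊂ S, ∃ c, H.IsColoringOn S' (H.cliqueNumOn S') c) :
    ∃ c, H.IsColoringOn S (H.cliqueNumOn S) c := by
  set S' := S.erase w₁
  obtain ⟨c', hc'⟩ := ih S' (erase_ssubset h₁)
  have hw₀ : w₀ ∈ S' := mem_erase.2 ⟨hadj.ne, h₀⟩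
  rcases lt_or_ge (H.cliqueNumOn S') (H.cliqueNumOn S) with hlt | hle
  · refine ⟨_, hc'.extend (fun u hu u' hu' => ?_) hlt⟩
    rw [sdiff_erase_self h₁, mem_singleton] at hu hu'
    exact hu ▸ hu' ▸ H.irrefl
  set D := S'.filter fun u => c' u = c' w₀ ∧ u ≠ w₀
  have hD : ∀ u ∈ D, u ∈ S' ∧ c' u = c' w₀ ∧ u ≠ w₀ := fun u hu => by
    simpa only [D, mem_filter, and_assoc] using hu
  set S'' := S' \ D
  have hS''S : S'' ⊂ S := (sdiff_subset).trans_ssubset (erase_ssubset h₁)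
  have hsmall : H.cliqueNumOn S'' < H.cliqueNumOn S' := by
    obtain ⟨T, hTS'', hT, hTcard⟩ := exists_isClique_card_eq_cliqueNumOn (H := H) S''
    have hTS' : T ⊆ S' := hTS''.trans sdiff_subset
    refine hTcard ▸ (hT.card_le_cliqueNumOn hTS').lt_of_ne fun hTmax => ?_
    -- a maximum clique of `S'` meets every colour class, so `T` contains `w₀` …
    have hinj : Set.InjOn c' T := fun u hu u' hu' hcu => by
      by_contra hne
      exact hc'.2 u (hTS' hu) u' (hTS' hu') (hT hu hu' hne) hcu
    have himage : T.image c' = range (H.cliqueNumOn S') :=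
      eq_of_subset_of_card_le (fun j hj => by
        obtain ⟨u, hu, rfl⟩ := mem_image.1 hj
        exact mem_range.2 (hc'.1 u (hTS' hu)))
        (by rw [card_range, card_image_of_injOn hinj, hTmax])
    obtain ⟨u, huT, hcu⟩ := mem_image.1 (himage ▸ mem_range.2 (hc'.1 w₀ hw₀))
    have hu : u = w₀ := by
      by_contra hne
      exact (mem_sdiff.1 (hTS'' huT)).2 (mem_filter.2 ⟨hTS' huT, hcu, hne⟩)
    -- … and then `w₁` extends `T` to a clique of `S` larger than `H.cliqueNumOn S`.
    have hw₁T : w₁ ∉ T := fun h => (mem_erase.1 (hTS' h)).1 rfl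
    have hbig : (insert w₁ T).card ≤ H.cliqueNumOn S := by
      refine IsClique.card_le_cliqueNumOn (insert_subset h₁ (hTS'.trans (erase_subset _ _))) ?_
      rw [coe_insert]
      refine hT.insert fun v hv hne => ?_
      by_cases hv₀ : v = w₀
      · exact hv₀ ▸ hadj.symm
      · exact (htwin v hv₀ hne.symm).1 (hu ▸ hT (hu ▸ huT) hv (Ne.symm (hu ▸ hv₀)))
    rw [card_insert_of_notMem hw₁T] at hbig
    omega
  obtain ⟨c'', hc''⟩ := ih S'' hS''S
  refine ⟨_, hc''.extend (fun u hu u' hu' hadj' => ?_)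
    (hsmall.trans_le (cliqueNumOn_mono (erase_subset _ _)))⟩
  have hout : ∀ v ∈ S \ S'', v = w₁ ∨ v ∈ D := fun v hv => by
    by_contra! h
    obtain ⟨hvS, hvS''⟩ := mem_sdiff.1 hv
    exact hvS'' (mem_sdiff.2 ⟨mem_erase.2 ⟨h.1, hvS⟩, h.2⟩)
  have hw₁D : ∀ v ∈ D, ¬H.Adj w₁ v := fun v hv hadj₁ => by
    obtain ⟨hvS', hcv, hv₀⟩ := hD v hv
    exact hc'.2 w₀ hw₀ v hvS' ((htwin v hv₀ (mem_erase.1 hvS').1).2 hadj₁) hcv.symm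
  rcases hout u hu with rfl | huD <;> rcases hout u' hu' with rfl | hu'D
  · exact H.irrefl hadj'
  · exact hw₁D u' hu'D hadj'
  · exact hw₁D u huD hadj'.symm
  · obtain ⟨huS', hcu, -⟩ := hD u huD
    obtain ⟨hu'S', hcu', -⟩ := hD u' hu'D
    exact hc'.2 u huS' u' hu'S' hadj' (hcu.trans hcu'.symm)

end Coloring
end SimpleGraph

section Blowup

variable {V : Type*} (G : SimpleGraph V)

/-- The lexicographic product `G[K_ℕ]`: every vertex becomes a clique of copies. -/
def SimpleGraph.cliqueBlowup : SimpleGraph (V × ℕ) where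
  Adj w w' := G.Adj w.1 w'.1 ∨ (w.1 = w'.1 ∧ w ≠ w')
  symm := ⟨fun w w' => by
    rintro (h | ⟨h, hne⟩)
    exacts [Or.inl h.symm, Or.inr ⟨h.symm, hne.symm⟩]⟩
  loopless := ⟨fun w => by
    rintro (h | ⟨-, h⟩)
    exacts [G.irrefl h, h rfl]⟩

variable {G}

theorem SimpleGraph.IsClique.image_fst [DecidableEq V] {T : Finset (V × ℕ)}
    (hT : G.cliqueBlowup.IsClique (T : Set (V × ℕ))) : G.IsClique (T.image Prod.fst : Set V) := by
  intro a ha b hb hab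
  obtain ⟨w, hw, rfl⟩ := mem_image.1 ha
  obtain ⟨w', hw', rfl⟩ := mem_image.1 hb
  exact (hT hw hw' fun h => hab (h ▸ rfl)).resolve_right fun h => hab h.1

theorem IsPerfect.colorable_induce (hG : IsPerfect G) {s : Set V} {k : ℕ}
    (h : ∀ K : Finset V, (K : Set V) ⊆ s → G.IsClique (K : Set V) → #K ≤ k) :
    (G.induce s).Colorable k := by
  rw [← chromaticNumber_le_iff_colorable, ← hG s]
  refine iSup₂_le fun t ht => ?_
  have hK := h (t.map (.subtype _)) (by simp) (by simpa [isClique_induce_iff] using ht)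
  exact_mod_cast (card_map _).symm.trans_le hK

theorem IsPerfect.exists_isColoringOn_of_injOn [DecidableEq V] (hG : IsPerfect G)
    {S : Finset (V × ℕ)} (hS : Set.InjOn Prod.fst (S : Set (V × ℕ))) :
    ∃ c, G.cliqueBlowup.IsColoringOn S (G.cliqueBlowup.cliqueNumOn S) c := by
  set s : Set V := ↑(S.image Prod.fst)
  have hs : ∀ w ∈ S, w.1 ∈ s := fun w hw => mem_coe.2 (mem_image_of_mem _ hw)
  obtain ⟨C⟩ := hG.colorable_induce (s := s) (k := G.cliqueBlowup.cliqueNumOn S) fun K hKs hK => by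
    have hsurj : Set.SurjOn Prod.fst (S.filter (·.1 ∈ K) : Set (V × ℕ)) K := fun v hv => by
      obtain ⟨w, hw, rfl⟩ := mem_image.1 (hKs hv)
      exact ⟨w, mem_filter.2 ⟨hw, hv⟩, rfl⟩
    refine (card_le_card_of_surjOn _ hsurj).trans (IsClique.card_le_cliqueNumOn
      (filter_subset _ _) fun w hw w' hw' hne => Or.inl ?_)
    obtain ⟨hwS, hwK⟩ := mem_filter.1 hw
    obtain ⟨hw'S, hw'K⟩ := mem_filter.1 hw'
    exact hK hwK hw'K fun h => hne (hS hwS hw'S h)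
  refine ⟨fun w => if h : w.1 ∈ s then C ⟨w.1, h⟩ else 0, fun w hw => ?_,
    fun w hw w' hw' hadj => ?_⟩
  · simp only [dif_pos (hs w hw), Fin.is_lt]
  · simp only [dif_pos (hs w hw), dif_pos (hs w' hw')]
    rcases hadj with hadj | ⟨heq, hne⟩
    · exact fun h => C.valid (v := ⟨w.1, hs w hw⟩) (w := ⟨w'.1, hs w' hw'⟩) hadj (Fin.ext h)
    · exact absurd (hS hw hw' heq) hne

theorem IsPerfect.exists_isColoringOn_cliqueBlowup [DecidableEq V] (hG : IsPerfect G)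
    (S : Finset (V × ℕ)) : ∃ c, G.cliqueBlowup.IsColoringOn S (G.cliqueBlowup.cliqueNumOn S) c := by
  induction S using Finset.strongInduction with
  | H S ih =>
  by_cases hS : Set.InjOn Prod.fst (S : Set (V × ℕ))
  · exact hG.exists_isColoringOn_of_injOn hS
  obtain ⟨w₀, h₀, w₁, h₁, heq, hne⟩ : ∃ w₀ ∈ S, ∃ w₁ ∈ S, w₀.1 = w₁.1 ∧ w₀ ≠ w₁ := by
    simpa [Set.InjOn] using hS
  refine exists_isColoringOn_of_twins h₀ h₁ (Or.inr ⟨heq, hne⟩) (fun u hu₀ hu₁ => ?_) ih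
  simp only [cliqueBlowup, heq, ne_eq, hu₀.symm, hu₁.symm, not_false_eq_true]

end Blowup

section StablePolytope

open Filter Topology Pointwise

variable {n : ℕ} {G : SimpleGraph (Fin n)}

def charVec (I : Finset (Fin n)) : Fin n → ℝ := fun i => if i ∈ I then 1 else 0

variable (G) in
def stabPolytope : Set (Fin n → ℝ) := convexHull ℝ (charVec '' {I | IsStable G I})

theorem sum_charVec (K I : Finset (Fin n)) : ∑ i ∈ K, charVec I i = #(K ∩ I) := by
  simp [charVec]

theorem card_inter_le_one_of_isClique_of_isStable {K I : Finset (Fin n)}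
    (hK : G.IsClique (K : Set (Fin n))) (hI : IsStable G I) : #(K ∩ I) ≤ 1 :=
  card_le_one.2 fun a ha b hb => by
    rw [mem_inter] at ha hb
    by_contra hab
    exact hI ha.2 hb.2 (hK ha.1 hb.1 hab)

theorem isStable_image_fst_of_isColoringOn {S : Finset (Fin n × ℕ)} {k : ℕ} {c : Fin n × ℕ → ℕ}
    (hc : G.cliqueBlowup.IsColoringOn S k c) (j : ℕ) :
    IsStable G ((S.filter (c · = j)).image Prod.fst) := by
  intro a ha b hb hab
  obtain ⟨w, hw, rfl⟩ := mem_image.1 ha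
  obtain ⟨w', hw', rfl⟩ := mem_image.1 hb
  obtain ⟨hwS, hcw⟩ := mem_filter.1 hw
  obtain ⟨hw'S, hcw'⟩ := mem_filter.1 hw'
  exact hc.2 w hwS w' hw'S (Or.inl hab) (hcw.trans hcw'.symm)

theorem IsPerfect.natCast_div_mem_stabPolytope (hG : IsPerfect G) {q : ℕ} (hq : 0 < q)
    (y : Fin n → ℕ) (hy : ∀ K : Finset (Fin n), G.IsClique (K : Set (Fin n)) → ∑ i ∈ K, y i ≤ q) :
    (fun i => (y i : ℝ) / q) ∈ stabPolytope G := by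
  set S : Finset (Fin n × ℕ) := univ.biUnion fun i => {i} ×ˢ range (y i)
  have hS : ∀ i a, (i, a) ∈ S ↔ a < y i := by simp [S]
  have hω : G.cliqueBlowup.cliqueNumOn S ≤ q := by
    obtain ⟨T, hTS, hT, hTcard⟩ := exists_isClique_card_eq_cliqueNumOn (H := G.cliqueBlowup) S
    have hTK : T ⊆ (T.image Prod.fst).biUnion fun i => {i} ×ˢ range (y i) := fun w hw => by
      have := (hS w.1 w.2).1 (hTS hw)
      simp only [mem_biUnion, mem_image, mem_product, mem_singleton, mem_range]
      exact ⟨w.1, ⟨w, hw, rfl⟩, rfl, this⟩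
    calc G.cliqueBlowup.cliqueNumOn S = #T := hTcard.symm
      _ ≤ ∑ i ∈ T.image Prod.fst, #({i} ×ˢ range (y i)) := (card_le_card hTK).trans card_biUnion_le
      _ = ∑ i ∈ T.image Prod.fst, y i := by simp
      _ ≤ q := hy _ hT.image_fst
  obtain ⟨c, hc⟩ := hG.exists_isColoringOn_cliqueBlowup S
  set I : ℕ → Finset (Fin n) := fun j => (S.filter (c · = j)).image Prod.fst
  have hcount : ∀ i, #((range q).filter (i ∈ I ·)) = y i := fun i => by
    have hclasses : (range q).filter (i ∈ I ·) = (range (y i)).image fun a => c (i, a) := by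
      ext j
      simp only [I, mem_filter, mem_range, mem_image, Prod.exists, hS]
      constructor
      · rintro ⟨-, a, b, ⟨hb, rfl⟩, rfl⟩
        exact ⟨b, hb, rfl⟩
      · rintro ⟨a, ha, rfl⟩
        exact ⟨(hc.1 _ ((hS i a).2 ha)).trans_le hω, i, a, ⟨ha, rfl⟩, rfl⟩
    rw [hclasses, card_image_of_injOn, card_range]
    intro a ha b hb hcab
    by_contra hab
    exact hc.2 _ ((hS i a).2 (mem_range.1 ha)) _ ((hS i b).2 (mem_range.1 hb))
      (Or.inr ⟨rfl, fun h => hab (Prod.ext_iff.1 h).2⟩) hcab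
  have hq' : (0 : ℝ) < q := Nat.cast_pos.2 hq
  have hpoint : (fun i => (y i : ℝ) / q) = ∑ j ∈ range q, (q : ℝ)⁻¹ • charVec (I j) := by
    funext i
    simp only [Finset.sum_apply, Pi.smul_apply, smul_eq_mul, ← mul_sum, charVec, sum_boole,
      hcount]
    rw [div_eq_inv_mul]
  rw [hpoint]
  exact (convex_convexHull ℝ _).sum_mem (fun _ _ => by positivity) (by simp [hq'.ne'])
    fun j _ => subset_convexHull ℝ _ ⟨I j, isStable_image_fst_of_isColoringOn hc j, rfl⟩

theorem IsPerfect.mem_stabPolytope (hG : IsPerfect G) {x : Fin n → ℝ} (hx₀ : 0 ≤ x)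
    (hx : ∀ K : Finset (Fin n), G.IsClique (K : Set (Fin n)) → ∑ i ∈ K, x i ≤ 1) :
    x ∈ stabPolytope G := by
  have hclosed : IsClosed (stabPolytope G) :=
    ((Set.toFinite _).image charVec).isCompact_convexHull (𝕜 := ℝ) |>.isClosed
  have hlim : Tendsto (fun q : ℕ => fun i => (⌊x i * q⌋₊ : ℝ) / q) atTop (𝓝 x) :=
    tendsto_pi_nhds.2 fun i =>
      (tendsto_nat_floor_mul_div_atTop (hx₀ i)).comp tendsto_natCast_atTop_atTop
  refine hclosed.mem_of_tendsto hlim (eventually_atTop.2 ⟨1, fun q hq =>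
    hG.natCast_div_mem_stabPolytope hq _ fun K hK => ?_⟩)
  have : ∑ i ∈ K, (⌊x i * q⌋₊ : ℝ) ≤ q :=
    calc ∑ i ∈ K, (⌊x i * q⌋₊ : ℝ) ≤ ∑ i ∈ K, x i * q :=
          sum_le_sum fun i _ => Nat.floor_le (mul_nonneg (hx₀ i) q.cast_nonneg)
      _ = (∑ i ∈ K, x i) * q := (sum_mul _ _ _).symm
      _ ≤ q := mul_le_of_le_one_left q.cast_nonneg (hx K hK)
  exact_mod_cast this

theorem IsPerfect.mem_smul_stabPolytope (hG : IsPerfect G) {t : ℝ} (ht : 0 ≤ t)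
    {x : Fin n → ℝ} (hx₀ : 0 ≤ x)
    (hx : ∀ K : Finset (Fin n), G.IsClique (K : Set (Fin n)) → ∑ i ∈ K, x i ≤ t) :
    x ∈ t • stabPolytope G := by
  rcases ht.eq_or_lt with rfl | ht
  · have hx0 : x = 0 := funext fun i => le_antisymm (by simpa using hx {i} (by simp)) (hx₀ i)
    have hne : (stabPolytope G).Nonempty :=
      ⟨_, subset_convexHull ℝ _ ⟨∅, fun _ h => absurd h (notMem_empty _), rfl⟩⟩
    rw [hx0, Set.zero_smul_set hne]
    exact Set.zero_mem_zero
  refine (Set.mem_smul_set_iff_inv_smul_mem₀ ht.ne' _ _).2 (hG.mem_stabPolytope ?_ fun K hK => ?_)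
  · exact smul_nonneg (inv_nonneg.2 ht.le) hx₀
  · simp only [Pi.smul_apply, smul_eq_mul, ← mul_sum]
    exact inv_mul_le_one_of_le₀ (hx K hK) ht.le

end StablePolytope

theorem exists_subset_sum_eq_sum_posPart {ι α : Type*} [AddCommGroup α] [LinearOrder α]
    (K : Finset ι) (f : ι → α) :
    ∃ L ⊆ K, ∑ i ∈ L, f i = ∑ i ∈ K, (f i)⁺ :=
  ⟨K.filter (0 ≤ f ·), filter_subset _ _, by rw [sum_filter]; simp [posPart_eq_ite]⟩

section Hansen

open Pointwise

variable {n : ℕ} {G : SimpleGraph (Fin n)}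

def cliqueForm (K : Finset (Fin n)) : (Fin (n + 1) → ℝ) →ₗ[ℝ] ℝ :=
  -LinearMap.proj 0 + (2 : ℝ) • ∑ i ∈ K, LinearMap.proj i.succ

theorem cliqueForm_apply (K : Finset (Fin n)) (x : Fin (n + 1) → ℝ) :
    cliqueForm K x = -(x 0) + 2 * ∑ i ∈ K, x i.succ := by
  simp [cliqueForm]

variable (G) in
def cliqueSlab : Set (Fin (n + 1) → ℝ) :=
  {x | ∀ K : Finset (Fin n), G.IsClique (K : Set (Fin n)) → cliqueForm K x ∈ Set.Icc (-1) 1}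

theorem convex_cliqueSlab : Convex ℝ (cliqueSlab G) := by
  have : cliqueSlab G = ⋂ K : Finset (Fin n), ⋂ _ : G.IsClique (K : Set (Fin n)),
      cliqueForm K ⁻¹' Set.Icc (-1) 1 := by
    ext x
    simp [cliqueSlab]
  rw [this]
  exact convex_iInter₂ fun K _ => (convex_Icc _ _).linear_preimage _

theorem hansenVert_eq_cons (I : Finset (Fin n)) : hansenVert I = Fin.cons 1 (charVec I) := rfl

theorem cliqueForm_hansenVert (K I : Finset (Fin n)) :
    cliqueForm K (hansenVert I) = 2 * #(K ∩ I) - 1 := by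
  rw [cliqueForm_apply, hansenVert_eq_cons]
  simp only [Fin.cons_zero, Fin.cons_succ, sum_charVec]
  ring

theorem hansenPolytope_subset_cliqueSlab : hansenPolytope G ⊆ cliqueSlab G := by
  refine convexHull_min ?_ convex_cliqueSlab
  rintro x ⟨I, hI, rfl | rfl⟩ K hK <;>
  · have h : (#(K ∩ I) : ℝ) ≤ 1 := by exact_mod_cast card_inter_le_one_of_isClique_of_isStable hK hI
    simp only [map_neg, cliqueForm_hansenVert, Set.mem_Icc]
    constructor <;> linarith [(#(K ∩ I)).cast_nonneg (α := ℝ)]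

theorem neg_mem_hansenPolytope {x : Fin (n + 1) → ℝ} (hx : x ∈ hansenPolytope G) :
    -x ∈ hansenPolytope G := by
  unfold hansenPolytope at hx ⊢
  have hx' := Set.neg_mem_neg.2 hx
  rw [← convexHull_neg] at hx'
  refine convexHull_mono (fun y hy => ?_) hx'
  obtain ⟨I, hI, h | h⟩ := Set.mem_neg.1 hy
  exacts [⟨I, hI, Or.inr (neg_eq_iff_eq_neg.1 h)⟩, ⟨I, hI, Or.inl (neg_inj.1 h)⟩]

theorem cons_one_mem_hansenPolytope {y : Fin n → ℝ} (hy : y ∈ stabPolytope G) :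
    (Fin.cons 1 y : Fin (n + 1) → ℝ) ∈ hansenPolytope G := by
  have hconvex :
      Convex ℝ {y : Fin n → ℝ | (Fin.cons 1 y : Fin (n + 1) → ℝ) ∈ hansenPolytope G} := by
    intro y₁ h₁ y₂ h₂ a b ha hb hab
    have : (Fin.cons 1 (a • y₁ + b • y₂) : Fin (n + 1) → ℝ) =
        a • Fin.cons 1 y₁ + b • Fin.cons 1 y₂ := by
      ext j
      refine Fin.cases ?_ (fun i => ?_) j <;> simp [hab]
    change _ ∈ hansenPolytope G
    rw [this]
    exact convex_convexHull ℝ _ h₁ h₂ ha hb hab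
  refine convexHull_min ?_ hconvex hy
  rintro _ ⟨I, hI, rfl⟩
  exact subset_convexHull ℝ _ ⟨I, hI, Or.inl (hansenVert_eq_cons I)⟩

theorem eq_smul_cons_one_add_smul_neg_cons_one {x : Fin (n + 1) → ℝ} {t : ℝ}
    (hx₀ : x 0 = 2 * t - 1) {y z : Fin n → ℝ} (hy : t • y = (Fin.tail x)⁺)
    (hz : (1 - t) • z = (Fin.tail x)⁻) :
    x = t • (Fin.cons 1 y : Fin (n + 1) → ℝ) + (1 - t) • -(Fin.cons 1 z) := by
  ext j
  refine Fin.cases ?_ (fun i => ?_) j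
  · simp only [Pi.add_apply, Pi.smul_apply, Pi.neg_apply, Fin.cons_zero, smul_eq_mul, hx₀]
    ring
  · have hyi := congrFun hy i
    have hzi := congrFun hz i
    simp only [Pi.smul_apply, smul_eq_mul, Pi.posPart_apply, Pi.negPart_apply] at hyi hzi
    simp only [Pi.add_apply, Pi.smul_apply, Pi.neg_apply, Fin.cons_succ, smul_eq_mul, mul_neg,
      hyi, hzi, ← sub_eq_add_neg]
    exact (posPart_sub_negPart (Fin.tail x i)).symm

theorem IsPerfect.cliqueSlab_subset_hansenPolytope (hG : IsPerfect G) :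
    cliqueSlab G ⊆ hansenPolytope G := by
  intro x hx
  set t := (1 + x 0) / 2 with ht
  set x' : Fin n → ℝ := Fin.tail x
  have hbounds : ∀ K : Finset (Fin n), G.IsClique (K : Set (Fin n)) →
      t - 1 ≤ ∑ i ∈ K, x' i ∧ ∑ i ∈ K, x' i ≤ t := fun K hK => by
    have := hx K hK
    rw [Set.mem_Icc, cliqueForm_apply] at this
    have hx' : ∑ i ∈ K, x' i = ∑ i ∈ K, x i.succ := rfl
    constructor <;> linarith [this.1, this.2]
  obtain ⟨ht₁, ht₀⟩ : t ≤ 1 ∧ 0 ≤ t := by simpa using hbounds ∅ (by simp)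
  obtain ⟨y, hy, hpos⟩ := hG.mem_smul_stabPolytope ht₀ (posPart_nonneg x') fun K hK => by
    obtain ⟨L, hLK, hL⟩ := exists_subset_sum_eq_sum_posPart K x'
    simpa [← hL] using (hbounds L (hK.subset (coe_subset.2 hLK))).2
  obtain ⟨z, hz, hneg⟩ := hG.mem_smul_stabPolytope (sub_nonneg.2 ht₁) (negPart_nonneg x')
    fun K hK => by
      obtain ⟨L, hLK, hL⟩ := exists_subset_sum_eq_sum_posPart K (-x')
      have := (hbounds L (hK.subset (coe_subset.2 hLK))).1
      simp only [Pi.neg_apply, posPart_neg, sum_neg_distrib] at hL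
      simp only [Pi.negPart_apply, ← hL]
      linarith
  rw [eq_smul_cons_one_add_smul_neg_cons_one (by rw [ht]; ring) hpos hneg]
  exact convex_convexHull ℝ _ (cons_one_mem_hansenPolytope hy)
    (neg_mem_hansenPolytope (cons_one_mem_hansenPolytope hz)) ht₀ (sub_nonneg.2 ht₁) (by ring)

end Hansen

/-- For a perfect graph `G`, the Hansen polytope `H(G)` is exactly the set of points
`x ∈ ℝ^{n+1}` satisfying `−1 ≤ −x_0 + 2·∑_{i ∈ K} x_i ≤ 1` for every clique `K` of `G`. -/
theorem hansen_facet_description {n : ℕ} (G : SimpleGraph (Fin n)) (hG : IsPerfect G) :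
    hansenPolytope G =
      {x : Fin (n + 1) → ℝ | ∀ K : Finset (Fin n), G.IsClique (↑K : Set (Fin n)) →
        -1 ≤ -(x 0) + 2 * (∑ i ∈ K, x i.succ) ∧ -(x 0) + 2 * (∑ i ∈ K, x i.succ) ≤ 1} := by
  refine (hansenPolytope_subset_cliqueSlab.antisymm hG.cliqueSlab_subset_hansenPolytope).trans ?_
  ext x
  simp only [cliqueSlab, cliqueForm_apply, Set.mem_Icc, Set.mem_ofPred_eq]
end

section
/- Let G be a finite simple graph on vertex set {1,…,n} and let G ⊔ v be the disjoint union of G with one additional isolated vertex v (labelled n+1). Then there is a linear automorphism of ℝ^{n+2} mapping the Hansen polytope H(G ⊔ v) onto the product H(G) × [−1,1]; explicitly, the linear map determined by e_0 ↦ e_0 − e_{n+1}, e_{n+1} ↦ 2e_{n+1}, and e_i ↦ e_i for i = 1,…,n realizes such an equivalence. -/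
/-- `G ⊔ v`: the disjoint union of `G` with one additional isolated vertex,
labelled `Fin.last n`. -/
def addIsolatedVertex {n : ℕ} (G : SimpleGraph (Fin n)) : SimpleGraph (Fin (n + 1)) :=
  G.map Fin.castSuccEmb

/-! ### Auxiliary machinery -/

lemma hansenFinCases3 {n : ℕ} (j : Fin (n+2)) :
    j = 0 ∨ (∃ i : Fin n, j = Fin.castSucc i.succ) ∨ j = Fin.last (n+1) := by
  induction j using Fin.lastCases with
  | last => exact Or.inr (Or.inr rfl)
  | cast k =>
    induction k using Fin.cases with
    | zero => exact Or.inl (by simp)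
    | succ i => exact Or.inr (Or.inl ⟨i, rfl⟩)

/-- The linear map `(w, t) ↦ Fin.snoc w t`. -/
def hansenSnocL (n : ℕ) : ((Fin (n+1) → ℝ) × ℝ) →ₗ[ℝ] (Fin (n+2) → ℝ) where
  toFun p := Fin.snoc p.1 p.2
  map_add' p q := by
    funext j
    induction j using Fin.lastCases <;> simp
  map_smul' c p := by
    funext j
    induction j using Fin.lastCases <;> simp

lemma hansenSnoc_neg {n : ℕ} (w : Fin (n+1) → ℝ) (t : ℝ) :
    (Fin.snoc (-w) (-t) : Fin (n+2) → ℝ) = -Fin.snoc w t := by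
  funext j
  induction j using Fin.lastCases <;> simp

lemma hansenSnoc_eq_self {n : ℕ} (x : Fin (n+2) → ℝ) :
    Fin.snoc (fun j : Fin (n+1) => x (Fin.castSucc j)) (x (Fin.last (n+1))) = x := by
  funext j
  induction j using Fin.lastCases <;> simp

/-- Remove the last vertex from a vertex set of `Fin (n+1)`. -/
def hansenStrip {n : ℕ} (J : Finset (Fin (n+1))) : Finset (Fin n) :=
  Finset.univ.filter (fun i => Fin.castSucc i ∈ J)

lemma mem_hansenStrip {n : ℕ} {J : Finset (Fin (n+1))} {i : Fin n} :
    i ∈ hansenStrip J ↔ Fin.castSucc i ∈ J := by simp [hansenStrip]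

lemma hansenVert_zero {n : ℕ} (I : Finset (Fin n)) : hansenVert I 0 = 1 := by simp [hansenVert]

lemma hansenVert_succ {n : ℕ} (I : Finset (Fin n)) (i : Fin n) :
    hansenVert I i.succ = if i ∈ I then 1 else 0 := by simp [hansenVert]

lemma hansenVert_castSucc {n : ℕ} (J : Finset (Fin (n+1))) (k : Fin (n+1)) :
    hansenVert J (Fin.castSucc k) = hansenVert (hansenStrip J) k := by
  induction k using Fin.cases with
  | zero => simp [hansenVert_zero]
  | succ i =>
    rw [← Fin.succ_castSucc, hansenVert_succ, hansenVert_succ]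
    simp [mem_hansenStrip]

lemma hansenVert_last {n : ℕ} (J : Finset (Fin (n+1))) :
    hansenVert J (Fin.last (n+1)) = if Fin.last n ∈ J then 1 else 0 := by
  rw [← Fin.succ_last, hansenVert_succ]

lemma hansenStable_strip {n : ℕ} {G : SimpleGraph (Fin n)} {J : Finset (Fin (n+1))}
    (h : IsStable (addIsolatedVertex G) J) : IsStable G (hansenStrip J) := by
  intro a ha b hb hadj
  exact h (mem_hansenStrip.1 ha) (mem_hansenStrip.1 hb)
    (by rw [addIsolatedVertex, SimpleGraph.map_adj]; exact ⟨a, b, hadj, rfl, rfl⟩)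

lemma hansenStable_of_castSucc {n : ℕ} {G : SimpleGraph (Fin n)} {I : Finset (Fin n)}
    (hI : IsStable G I) (J : Finset (Fin (n+1)))
    (hJ : ∀ i : Fin n, Fin.castSucc i ∈ J → i ∈ I) :
    IsStable (addIsolatedVertex G) J := by
  intro a ha b hb hadj
  rw [addIsolatedVertex, SimpleGraph.map_adj] at hadj
  obtain ⟨u, v, huv, hu, hv⟩ := hadj
  simp only [Fin.coe_castSuccEmb] at hu hv
  subst hu; subst hv
  exact hI (hJ u ha) (hJ v hb) huv

section Lmap

variable {n : ℕ} (L : (Fin (n + 2) → ℝ) →ₗ[ℝ] (Fin (n + 2) → ℝ))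
    (h0 : L (Pi.single 0 1) =
      (Pi.single 0 1 : Fin (n + 2) → ℝ) - Pi.single (Fin.last (n + 1)) 1)
    (hlast : L (Pi.single (Fin.last (n + 1)) 1) =
      (2 : ℝ) • (Pi.single (Fin.last (n + 1)) 1 : Fin (n + 2) → ℝ))
    (hmid : ∀ i : Fin n, L (Pi.single (Fin.castSucc i.succ) 1) =
      (Pi.single (Fin.castSucc i.succ) 1 : Fin (n + 2) → ℝ))

include h0 hlast hmid in
lemma hansenL_apply (x : Fin (n+2) → ℝ) (p : Fin (n+2)) :
    L x p = if p = Fin.last (n+1) then 2 * x (Fin.last (n+1)) - x 0 else x p := by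
  have hlast0 : Fin.last (n+1) ≠ (0 : Fin (n+2)) := by simp [Fin.ext_iff]
  have hb : ∀ j : Fin (n+2), ∀ p : Fin (n+2), L (Pi.single j 1) p =
      if p = Fin.last (n+1) then
        2 * (Pi.single j 1 : Fin (n + 2) → ℝ) (Fin.last (n+1)) -
          (Pi.single j 1 : Fin (n + 2) → ℝ) 0
      else (Pi.single j 1 : Fin (n + 2) → ℝ) p := by
    intro j p
    rcases hansenFinCases3 j with rfl | ⟨i, rfl⟩ | rfl
    · rw [h0]
      by_cases hp : p = Fin.last (n+1)
      · subst hp; simp [Pi.single_eq_of_ne hlast0]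
      · simp [hp, Pi.single_eq_of_ne hp]
    · rw [hmid i]
      have h1 : Fin.castSucc i.succ ≠ (0 : Fin (n+2)) := by simp [Fin.succ_ne_zero]
      have h2 : Fin.castSucc i.succ ≠ Fin.last (n+1) := (Fin.castSucc_lt_last _).ne
      by_cases hp : p = Fin.last (n+1)
      · subst hp; simp [Pi.single_eq_of_ne h2.symm, Pi.single_eq_of_ne h1.symm]
      · simp [hp]
    · rw [hlast]
      by_cases hp : p = Fin.last (n+1)
      · subst hp; simp [Pi.single_eq_of_ne hlast0]
      · simp [hp, Pi.single_eq_of_ne hp]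
  have hsingle : ∀ i : Fin (n+2), (fun j => if i = j then (1:ℝ) else 0) = Pi.single i 1 := by
    intro i; funext j; rw [Pi.single_apply]; exact if_congr eq_comm rfl rfl
  have hsum : ∀ q : Fin (n+2), (∑ i, x i * (Pi.single i 1 : Fin (n + 2) → ℝ) q) = x q := by
    intro q
    simp [Pi.single_apply, mul_ite, Finset.sum_ite_eq']
  rw [LinearMap.pi_apply_eq_sum_univ L x]
  simp only [hsingle]
  rw [Finset.sum_apply]
  simp only [Pi.smul_apply, smul_eq_mul, hb]
  by_cases hp : p = Fin.last (n+1)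
  · subst hp
    simp only [if_true, eq_self_iff_true, mul_sub]
    rw [Finset.sum_sub_distrib, hsum]
    congr 1
    rw [← hsum (Fin.last (n+1)), Finset.mul_sum]
    exact Finset.sum_congr rfl fun i _ => by ring
  · simp only [if_neg hp, hsum]

include h0 hlast hmid in
lemma hansenL_castSucc (x : Fin (n+2) → ℝ) (k : Fin (n+1)) :
    L x (Fin.castSucc k) = x (Fin.castSucc k) := by
  rw [hansenL_apply L h0 hlast hmid, if_neg (Fin.castSucc_lt_last k).ne]

include h0 hlast hmid in
lemma hansenL_last (x : Fin (n+2) → ℝ) :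
    L x (Fin.last (n+1)) = 2 * x (Fin.last (n+1)) - x 0 := by
  rw [hansenL_apply L h0 hlast hmid, if_pos rfl]

include h0 hlast hmid in
lemma hansenL_zero (x : Fin (n+2) → ℝ) : L x 0 = x 0 := by
  have h := hansenL_castSucc L h0 hlast hmid x 0
  rwa [Fin.castSucc_zero] at h

include h0 hlast hmid in
lemma hansenL_bijective : Function.Bijective L := by
  set M : (Fin (n+2) → ℝ) → (Fin (n+2) → ℝ) := fun x =>
    Fin.snoc (fun j : Fin (n+1) => x (Fin.castSucc j)) ((x (Fin.last (n+1)) + x 0) / 2) with hM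
  have hM0 : ∀ x, M x 0 = x 0 := by
    intro x
    have : (0 : Fin (n+2)) = Fin.castSucc 0 := (Fin.castSucc_zero).symm
    rw [hM]
    simp only [this, Fin.snoc_castSucc]
  refine Function.bijective_iff_has_inverse.mpr ⟨M, fun x => ?_, fun x => ?_⟩
  · funext j
    induction j using Fin.lastCases with
    | last =>
      rw [hM]
      simp only [Fin.snoc_last]
      rw [hansenL_last L h0 hlast hmid, hansenL_zero L h0 hlast hmid]
      ring
    | cast k =>
      rw [hM]
      simp only [Fin.snoc_castSucc]
      exact hansenL_castSucc L h0 hlast hmid x k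
  · funext j
    induction j using Fin.lastCases with
    | last =>
      rw [hansenL_last L h0 hlast hmid, hM0]
      rw [hM]
      simp only [Fin.snoc_last]
      ring
    | cast k =>
      rw [hansenL_castSucc L h0 hlast hmid]
      rw [hM]
      simp only [Fin.snoc_castSucc]

include h0 hlast hmid in
lemma hansenL_vert (J : Finset (Fin (n+1))) :
    L (hansenVert J) =
      Fin.snoc (hansenVert (hansenStrip J)) (if Fin.last n ∈ J then (1:ℝ) else -1) := by
  funext p
  induction p using Fin.lastCases with
  | last =>
    rw [Fin.snoc_last, hansenL_last L h0 hlast hmid, hansenVert_last, hansenVert_zero]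
    split_ifs <;> norm_num
  | cast k =>
    rw [Fin.snoc_castSucc, hansenL_castSucc L h0 hlast hmid, hansenVert_castSucc]

include h0 hlast hmid in
lemma hansenL_exists_vert {G : SimpleGraph (Fin n)} {I : Finset (Fin n)}
    (hI : IsStable G I) (t : ℝ) (ht : t = -1 ∨ t = 1) :
    ∃ J : Finset (Fin (n+1)), IsStable (addIsolatedVertex G) J ∧
      L (hansenVert J) = Fin.snoc (hansenVert I) t := by
  have hmemb : ∀ i : Fin n, Fin.castSucc i ∈ I.image Fin.castSucc ↔ i ∈ I := by
    intro i
    simp [Finset.mem_image, Fin.castSucc_inj]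
  have hlastnot : Fin.last n ∉ I.image Fin.castSucc := by
    intro h
    rw [Finset.mem_image] at h
    obtain ⟨a, _, ha⟩ := h
    exact (Fin.castSucc_lt_last a).ne ha
  rcases ht with rfl | rfl
  · refine ⟨I.image Fin.castSucc,
      hansenStable_of_castSucc hI _ (fun i hi => (hmemb i).1 hi), ?_⟩
    rw [hansenL_vert L h0 hlast hmid]
    have h1 : hansenStrip (I.image Fin.castSucc) = I := by
      ext i; rw [mem_hansenStrip, hmemb]
    rw [h1, if_neg hlastnot]
  · refine ⟨insert (Fin.last n) (I.image Fin.castSucc),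
      hansenStable_of_castSucc hI _ (fun i hi => ?_), ?_⟩
    · rcases Finset.mem_insert.1 hi with h | h
      · exact absurd h (Fin.castSucc_lt_last i).ne
      · exact (hmemb i).1 h
    · rw [hansenL_vert L h0 hlast hmid]
      have h1 : hansenStrip (insert (Fin.last n) (I.image Fin.castSucc)) = I := by
        ext i
        rw [mem_hansenStrip, Finset.mem_insert]
        constructor
        · rintro (h | h)
          · exact absurd h (Fin.castSucc_lt_last i).ne
          · exact (hmemb i).1 h
        · exact fun h => Or.inr ((hmemb i).2 h)
      rw [h1, if_pos (Finset.mem_insert_self _ _)]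

end Lmap

/-- The linear map of `ℝ^{n+2}` determined by `e_0 ↦ e_0 − e_{n+1}`, `e_{n+1} ↦ 2e_{n+1}`
and `e_i ↦ e_i` for `i = 1, …, n` is bijective and maps the Hansen polytope
`H(G ⊔ v) ⊆ ℝ^{n+2}` onto the product `H(G) × [−1,1]`. -/
theorem hansen_addIsolated_prod {n : ℕ} (G : SimpleGraph (Fin n))
    (L : (Fin (n + 2) → ℝ) →ₗ[ℝ] (Fin (n + 2) → ℝ))
    (h0 : L (Pi.single 0 1) =
      (Pi.single 0 1 : Fin (n + 2) → ℝ) - Pi.single (Fin.last (n + 1)) 1)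
    (hlast : L (Pi.single (Fin.last (n + 1)) 1) =
      (2 : ℝ) • (Pi.single (Fin.last (n + 1)) 1 : Fin (n + 2) → ℝ))
    (hmid : ∀ i : Fin n, L (Pi.single (Fin.castSucc i.succ) 1) =
      (Pi.single (Fin.castSucc i.succ) 1 : Fin (n + 2) → ℝ)) :
    Function.Bijective L ∧
      L '' hansenPolytope (addIsolatedVertex G) =
        {x : Fin (n + 2) → ℝ | (fun j : Fin (n + 1) => x (Fin.castSucc j)) ∈ hansenPolytope G ∧
          x (Fin.last (n + 1)) ∈ Set.Icc (-1 : ℝ) 1} := by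
  refine ⟨hansenL_bijective L h0 hlast hmid, ?_⟩
  set V' : Set (Fin (n+2) → ℝ) :=
    {x | ∃ J : Finset (Fin (n+1)), IsStable (addIsolatedVertex G) J ∧
      (x = hansenVert J ∨ x = -hansenVert J)} with hV'
  set V : Set (Fin (n+1) → ℝ) :=
    {x | ∃ I : Finset (Fin n), IsStable G I ∧ (x = hansenVert I ∨ x = -hansenVert I)} with hV
  have himg : L '' V' = (hansenSnocL n) '' (V ×ˢ ({-1, 1} : Set ℝ)) := by
    ext x
    constructor
    · rintro ⟨y, ⟨J, hJ, hy | hy⟩, rfl⟩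
      · refine ⟨(hansenVert (hansenStrip J), if Fin.last n ∈ J then 1 else -1),
          ⟨⟨hansenStrip J, hansenStable_strip hJ, Or.inl rfl⟩, ?_⟩, ?_⟩
        · split_ifs <;> simp
        · rw [hy]
          exact (hansenL_vert L h0 hlast hmid J).symm
      · refine ⟨(-hansenVert (hansenStrip J), -(if Fin.last n ∈ J then 1 else -1)),
          ⟨⟨hansenStrip J, hansenStable_strip hJ, Or.inr rfl⟩, ?_⟩, ?_⟩
        · split_ifs <;> simp
        · rw [hy, map_neg, hansenL_vert L h0 hlast hmid J]
          exact hansenSnoc_neg _ _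
    · rintro ⟨⟨w, t⟩, ⟨⟨I, hI, hw | hw⟩, ht⟩, rfl⟩ <;>
        rw [Set.mem_insert_iff, Set.mem_singleton_iff] at ht
      · have hw' : w = hansenVert I := hw
        have ht2 : t = -1 ∨ t = 1 := ht
        obtain ⟨J, hJ, hLJ⟩ := hansenL_exists_vert L h0 hlast hmid hI t ht2
        refine ⟨hansenVert J, ⟨J, hJ, Or.inl rfl⟩, ?_⟩
        show L (hansenVert J) = Fin.snoc w t
        rw [hLJ, hw']
      · have hw' : w = -hansenVert I := hw
        have ht2 : t = -1 ∨ t = 1 := ht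
        have ht' : -t = -1 ∨ -t = 1 := by rcases ht2 with rfl | rfl <;> simp
        obtain ⟨J, hJ, hLJ⟩ := hansenL_exists_vert L h0 hlast hmid hI (-t) ht'
        refine ⟨-hansenVert J, ⟨J, hJ, Or.inr rfl⟩, ?_⟩
        show L (-hansenVert J) = Fin.snoc w t
        rw [map_neg, hLJ, hw', ← hansenSnoc_neg, neg_neg]
  have hIcc : convexHull ℝ ({-1, 1} : Set ℝ) = Set.Icc (-1 : ℝ) 1 := by
    rw [convexHull_pair, segment_eq_Icc (by norm_num : (-1:ℝ) ≤ 1)]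
  calc L '' hansenPolytope (addIsolatedVertex G)
      = L '' (convexHull ℝ V') := rfl
    _ = convexHull ℝ (L '' V') := L.image_convexHull V'
    _ = convexHull ℝ ((hansenSnocL n) '' (V ×ˢ ({-1, 1} : Set ℝ))) := by rw [himg]
    _ = (hansenSnocL n) '' (convexHull ℝ (V ×ˢ ({-1, 1} : Set ℝ))) :=
        ((hansenSnocL n).image_convexHull _).symm
    _ = (hansenSnocL n) '' ((convexHull ℝ V) ×ˢ (convexHull ℝ ({-1, 1} : Set ℝ))) := by
        rw [convexHull_prod]
    _ = (hansenSnocL n) '' ((hansenPolytope G) ×ˢ Set.Icc (-1 : ℝ) 1) := by rw [hIcc]; rfl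
    _ = {x : Fin (n + 2) → ℝ |
          (fun j : Fin (n + 1) => x (Fin.castSucc j)) ∈ hansenPolytope G ∧
          x (Fin.last (n + 1)) ∈ Set.Icc (-1 : ℝ) 1} := by
        ext x
        constructor
        · rintro ⟨⟨w, t⟩, ⟨hw, ht⟩, rfl⟩
          constructor
          · show (fun j : Fin (n+1) => (Fin.snoc w t : Fin (n+2) → ℝ) (Fin.castSucc j)) ∈ _
            simpa [Fin.snoc_castSucc] using hw
          · show (Fin.snoc w t : Fin (n+2) → ℝ) (Fin.last (n+1)) ∈ _
            simpa [Fin.snoc_last] using ht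
        · rintro ⟨h1, h2⟩
          exact ⟨(fun j : Fin (n+1) => x (Fin.castSucc j), x (Fin.last (n+1))), ⟨h1, h2⟩,
            hansenSnoc_eq_self x⟩
end

section
/- Let G be a split graph on d−1 vertices. Then the Hansen polytope H(G) ⊆ ℝ^d has at least 3^d nonempty faces; that is, Kalai's 3^d-conjecture holds for Hansen polytopes of split graphs. -/
/-- The number of nonempty (exposed) faces of a polytope `P ⊆ ℝ^d`, including `P` itself. -/
noncomputable def numFaces {d : ℕ} (P : Set (Fin d → ℝ)) : ℕ :=
  {F : Set (Fin d → ℝ) | IsExposed ℝ P F ∧ F.Nonempty}.ncard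

/-!
The form `u_K x = 2 ∑_{i ∈ K} x_i - x_0` takes only the values `±1` on the vertices of `H(G)` when
`K` is a clique, so for families `𝒜, ℬ` of cliques the form `∑_{K ∈ 𝒜} u_K - ∑_{K ∈ ℬ} u_K`
exposes the face whose vertices are the `hansenVert I` with `I` meeting every clique of `𝒜` and
missing every clique of `ℬ`, together with the `-hansenVert I` with the roles of `𝒜` and `ℬ`
swapped (provided there is one such vertex).

For a split graph `C ⊔ S`, each sign vector `(a, σ) ∈ {-1, 0, 1} × {-1, 0, 1}ⁿ` gets a family
`𝒜(a, σ)` built from the positive part of `σ` (stars of positive stable vertices inside the positive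
clique vertices, plus cliques depending on `a`), and we take `ℬ = 𝒜(-a, -σ)`. The sign vector can
be read off its face: `a` from whether the face has vertices `± hansenVert I` with `I ⊆ S`, then
the signs on `S` and `C` by testing explicit stable sets. This gives `3^(n+1)` distinct nonempty
faces.
-/

open Finset

section ExposedFaces

variable {E : Type*} [AddCommGroup E] [Module ℝ E] [TopologicalSpace E]

theorem mem_toExposed_convexHull_iff {V : Set E} {l : StrongDual ℝ E} {m : ℝ}
    (hle : ∀ v ∈ V, l v ≤ m) {v₀ : E} (hv₀ : v₀ ∈ V) (hv₀m : l v₀ = m) {x : E}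
    (hx : x ∈ convexHull ℝ V) : x ∈ l.toExposed (convexHull ℝ V) ↔ l x = m := by
  have hle' : ∀ y ∈ convexHull ℝ V, l y ≤ m := fun y hy =>
    convexHull_min hle (convex_halfSpace_le l.isLinear m) hy
  refine ⟨fun hxF => le_antisymm (hle' x hx) ?_, fun hxm => ⟨hx, fun y hy => hxm ▸ hle' y hy⟩⟩
  exact hv₀m ▸ hxF.2 v₀ (subset_convexHull ℝ V hv₀)

/-- By Krein–Milman a face is recovered from its extreme points, which lie in `V`. -/
theorem Set.Finite.setOf_isExposed_convexHull [T2Space E] [IsTopologicalAddGroup E]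
    [ContinuousSMul ℝ E] [LocallyConvexSpace ℝ E] {V : Set E} (hV : V.Finite) :
    {F | IsExposed ℝ (convexHull ℝ V) F}.Finite := by
  refine hV.finite_subsets.of_injOn (f := fun F => F.extremePoints ℝ)
    (fun F hF => hF.isExtreme.extremePoints_subset_extremePoints.trans
      extremePoints_convexHull_subset) fun F hF F' hF' hFF' => ?_
  have hP := hV.isCompact_convexHull ℝ
  have hconv := convex_convexHull ℝ V
  rw [← closure_convexHull_extremePoints (hF.isCompact hP) (hF.convex hconv),
    ← closure_convexHull_extremePoints (hF'.isCompact hP) (hF'.convex hconv)]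
  exact congrArg (fun W => closure (convexHull ℝ W)) hFF'

end ExposedFaces

@[simp] lemma SignType.neg_eq_one_iff {x : SignType} : -x = 1 ↔ x = -1 := neg_eq_iff_eq_neg

lemma SignType.eq_of_imp {x y : SignType} (h₁ : x = 1 → y = 1) (h₂ : y = 1 → x = 1)
    (h₃ : x = -1 → y = -1) (h₄ : y = -1 → x = -1) : x = y := by
  decide +revert

lemma IsStable.subset {n : ℕ} {G : SimpleGraph (Fin n)} {I J : Finset (Fin n)}
    (hJ : IsStable G J) (hIJ : I ⊆ J) : IsStable G I :=
  fun _ ha _ hb => hJ (hIJ ha) (hIJ hb)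

namespace Hansen

variable {n : ℕ}

lemma card_inter_le_one {G : SimpleGraph (Fin n)} {I K : Finset (Fin n)} (hI : IsStable G I)
    (hK : G.IsClique (K : Set (Fin n))) : #(I ∩ K) ≤ 1 := by
  refine card_le_one.2 fun a ha b hb => ?_
  rw [mem_inter] at ha hb
  by_contra hab
  exact hI ha.1 hb.1 (hK ha.2 hb.2 hab)

def vertices (G : SimpleGraph (Fin n)) : Set (Fin (n + 1) → ℝ) :=
  {x | ∃ I : Finset (Fin n), IsStable G I ∧ (x = hansenVert I ∨ x = -hansenVert I)}

lemma vertices_finite (G : SimpleGraph (Fin n)) : (vertices G).Finite := by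
  refine ((Set.finite_range hansenVert).union (Set.finite_range (-hansenVert))).subset ?_
  rintro x ⟨I, -, rfl | rfl⟩
  exacts [Or.inl ⟨I, rfl⟩, Or.inr ⟨I, rfl⟩]

lemma hansenVert_mem_vertices {G : SimpleGraph (Fin n)} {I : Finset (Fin n)} (hI : IsStable G I) :
    hansenVert I ∈ vertices G :=
  ⟨I, hI, Or.inl rfl⟩

lemma neg_hansenVert_mem_vertices {G : SimpleGraph (Fin n)} {I : Finset (Fin n)}
    (hI : IsStable G I) : -hansenVert I ∈ vertices G :=
  ⟨I, hI, Or.inr rfl⟩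

noncomputable def cliqueForm (K : Finset (Fin n)) : StrongDual ℝ (Fin (n + 1) → ℝ) :=
  (2 : ℝ) • ∑ i ∈ K, ContinuousLinearMap.proj i.succ - ContinuousLinearMap.proj 0

lemma cliqueForm_hansenVert (K I : Finset (Fin n)) :
    cliqueForm K (hansenVert I) = 2 * #(I ∩ K) - 1 := by
  simp [cliqueForm, hansenVert, Finset.inter_comm]

lemma cliqueForm_hansenVert_of_isClique {G : SimpleGraph (Fin n)} {K I : Finset (Fin n)}
    (hI : IsStable G I) (hK : G.IsClique (K : Set (Fin n))) :
    cliqueForm K (hansenVert I) = if Disjoint I K then -1 else 1 := by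
  rw [cliqueForm_hansenVert]
  split_ifs with h
  · simp [disjoint_iff_inter_eq_empty.1 h]
  · have : #(I ∩ K) = 1 :=
      le_antisymm (card_inter_le_one hI hK) (card_pos.2 (not_disjoint_iff_nonempty_inter.1 h))
    norm_num [this]

noncomputable def familyForm (A B : Finset (Finset (Fin n))) :
    StrongDual ℝ (Fin (n + 1) → ℝ) :=
  ∑ K ∈ A, cliqueForm K - ∑ K ∈ B, cliqueForm K

lemma familyForm_neg (A B : Finset (Finset (Fin n))) (x : Fin (n + 1) → ℝ) :
    familyForm A B (-x) = familyForm B A x := by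
  rw [map_neg, familyForm, familyForm, sub_apply, sub_apply, neg_sub]

def Separates (A B : Finset (Finset (Fin n))) (I : Finset (Fin n)) : Prop :=
  (∀ K ∈ A, ¬Disjoint I K) ∧ ∀ K ∈ B, Disjoint I K

section FamilyForm

variable {G : SimpleGraph (Fin n)} {A B : Finset (Finset (Fin n))} {I : Finset (Fin n)}

lemma familyForm_hansenVert (hI : IsStable G I) (hA : ∀ K ∈ A, G.IsClique (K : Set (Fin n)))
    (hB : ∀ K ∈ B, G.IsClique (K : Set (Fin n))) :
    familyForm A B (hansenVert I) =
      #A + #B - 2 * (#{K ∈ A | Disjoint I K} + #{K ∈ B | ¬Disjoint I K} : ℕ) := by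
  have hA' := card_filter_add_card_filter_not (s := A) (Disjoint I)
  have hB' := card_filter_add_card_filter_not (s := B) (Disjoint I)
  simp only [familyForm, sub_apply, FunLike.coe_sum, Finset.sum_apply]
  rw [sum_congr rfl fun K hK => cliqueForm_hansenVert_of_isClique hI (hA K hK),
    sum_congr rfl fun K hK => cliqueForm_hansenVert_of_isClique hI (hB K hK), sum_ite, sum_ite]
  simp only [sum_const, nsmul_eq_mul, mul_neg, mul_one]
  rw [← hA', ← hB']
  push_cast
  ring

lemma familyForm_hansenVert_le (hI : IsStable G I) (hA : ∀ K ∈ A, G.IsClique (K : Set (Fin n)))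
    (hB : ∀ K ∈ B, G.IsClique (K : Set (Fin n))) : familyForm A B (hansenVert I) ≤ #A + #B := by
  rw [familyForm_hansenVert hI hA hB]
  exact sub_le_self _ (by positivity)

lemma familyForm_hansenVert_eq_iff (hI : IsStable G I)
    (hA : ∀ K ∈ A, G.IsClique (K : Set (Fin n))) (hB : ∀ K ∈ B, G.IsClique (K : Set (Fin n))) :
    familyForm A B (hansenVert I) = #A + #B ↔ Separates A B I := by
  rw [familyForm_hansenVert hI hA hB, sub_eq_self, mul_eq_zero, Nat.cast_eq_zero,
    Nat.add_eq_zero_iff, card_eq_zero, card_eq_zero, filter_eq_empty_iff, filter_eq_empty_iff]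
  simp [Separates]

end FamilyForm

noncomputable def familyFace (G : SimpleGraph (Fin n)) (A B : Finset (Finset (Fin n))) :
    Set (Fin (n + 1) → ℝ) :=
  (familyForm A B).toExposed (hansenPolytope G)

lemma mem_familyFace_iff {G : SimpleGraph (Fin n)} {A B : Finset (Finset (Fin n))}
    (hA : ∀ K ∈ A, G.IsClique (K : Set (Fin n))) (hB : ∀ K ∈ B, G.IsClique (K : Set (Fin n)))
    (hattained : ∃ J, IsStable G J ∧ (Separates A B J ∨ Separates B A J))
    {I : Finset (Fin n)} (hI : IsStable G I) :
    (hansenVert I ∈ familyFace G A B ↔ Separates A B I) ∧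
      (-hansenVert I ∈ familyFace G A B ↔ Separates B A I) := by
  have hneg : ∀ {J}, IsStable G J →
      (familyForm A B (-hansenVert J) = #A + #B ↔ Separates B A J) := fun hJ => by
    rw [familyForm_neg, add_comm (#A : ℝ)]
    exact familyForm_hansenVert_eq_iff hJ hB hA
  have hle : ∀ v ∈ vertices G, familyForm A B v ≤ #A + #B := by
    rintro _ ⟨J, hJ, rfl | rfl⟩
    · exact familyForm_hansenVert_le hJ hA hB
    · rw [familyForm_neg, add_comm (#A : ℝ)]
      exact familyForm_hansenVert_le hJ hB hA
  obtain ⟨v₀, hv₀, hv₀m⟩ : ∃ v₀ ∈ vertices G, familyForm A B v₀ = #A + #B := by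
    obtain ⟨J, hJ, h | h⟩ := hattained
    · exact ⟨_, hansenVert_mem_vertices hJ, (familyForm_hansenVert_eq_iff hJ hA hB).2 h⟩
    · exact ⟨_, neg_hansenVert_mem_vertices hJ, (hneg hJ).2 h⟩
  have hmem {x} (hx : x ∈ vertices G) :=
    mem_toExposed_convexHull_iff hle hv₀ hv₀m (subset_convexHull ℝ _ hx)
  exact ⟨(hmem (hansenVert_mem_vertices hI)).trans (familyForm_hansenVert_eq_iff hI hA hB),
    (hmem (neg_hansenVert_mem_vertices hI)).trans (hneg hI)⟩

section SplitGraph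

open scoped Classical

variable (G : SimpleGraph (Fin n)) (C S : Finset (Fin n))

def Anchored (σ : Fin n → SignType) : Prop :=
  ∀ c ∈ C, σ c ≠ 0 → ∃ s ∈ S, σ s ≠ 0 ∧ G.Adj c s

def IsPure (a : SignType) (σ : Fin n → SignType) : Prop :=
  a = 1 ∨ a = 0 ∧ Anchored G C S σ

/-- The cliques that `I` must meet for `hansenVert I` to lie on the face of the sign vector
`(a, σ)`: the stars force the positive stable vertices, the other cliques encode `a` and the signs
on `C`. -/
inductive IsHitClique (a : SignType) (σ : Fin n → SignType) : Finset (Fin n) → Prop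
  | star {s : Fin n} : s ∈ S → σ s = 1 → IsHitClique a σ (insert s {c ∈ C | σ c = 1 ∧ G.Adj s c})
  | pos : ¬IsPure G C S a σ → IsHitClique a σ {c ∈ C | σ c = 1}
  | extend {y : Fin n} : a = -1 → y ∈ C → σ y ≠ -1 → IsHitClique a σ (insert y {c ∈ C | σ c = 1})
  | lever {c s : Fin n} : a = 0 → Anchored G C S σ → c ∈ C → σ c = 0 →
      (∀ t ∈ S, G.Adj c t → σ t ≠ -1) → s ∈ S → σ s = 1 → G.Adj c s →
      IsHitClique a σ (insert c (insert s {x ∈ C | σ x = 1 ∧ G.Adj c x ∧ G.Adj s x}))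

def Admissible (a : SignType) (σ : Fin n → SignType) (I : Finset (Fin n)) : Prop :=
  (∀ K, IsHitClique G C S a σ K → ¬Disjoint I K) ∧
    ∀ K, IsHitClique G C S (-a) (-σ) K → Disjoint I K

noncomputable def hitFamily (a : SignType) (σ : Fin n → SignType) : Finset (Finset (Fin n)) :=
  univ.filter (IsHitClique G C S a σ)

noncomputable def splitFace (a : SignType) (σ : Fin n → SignType) : Set (Fin (n + 1) → ℝ) :=
  familyFace G (hitFamily G C S a σ) (hitFamily G C S (-a) (-σ))

noncomputable def cliqueWitness (σ : Fin n → SignType) (c : Fin n) : Finset (Fin n) :=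
  insert c {t ∈ S | σ t = 1 ∧ ¬G.Adj c t}

variable {G C S} {a b : SignType} {σ ρ : Fin n → SignType} {I K : Finset (Fin n)}

@[simp] lemma anchored_neg : Anchored G C S (-σ) ↔ Anchored G C S σ := by
  simp [Anchored]

lemma not_isPure_iff : ¬IsPure G C S a σ ↔ a = -1 ∨ a = 0 ∧ ¬Anchored G C S σ := by
  unfold IsPure
  generalize Anchored G C S σ = p
  cases a <;> simp

lemma separates_hitFamily_iff :
    Separates (hitFamily G C S a σ) (hitFamily G C S (-a) (-σ)) I ↔ Admissible G C S a σ I := by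
  simp [Separates, hitFamily, Admissible]

lemma IsHitClique.isClique (hC : G.IsClique (C : Set (Fin n)))
    (hK : IsHitClique G C S a σ K) : G.IsClique (K : Set (Fin n)) := by
  have hsub {p : Fin n → Prop} [DecidablePred p] :
      G.IsClique (({x ∈ C | p x} : Finset (Fin n)) : Set (Fin n)) :=
    hC.subset (coe_subset.2 (filter_subset _ _))
  cases hK with
  | star =>
    rw [coe_insert]
    exact hsub.insert fun x hx _ => (mem_filter.1 hx).2.2
  | pos => exact hsub
  | extend _ hyC =>
    rw [coe_insert]
    exact hsub.insert fun x hx hne => hC hyC (mem_filter.1 hx).1 hne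
  | lever _ _ _ _ _ _ _ hcs =>
    rw [coe_insert, coe_insert]
    refine (hsub.insert fun x hx _ => (mem_filter.1 hx).2.2.2).insert fun x hx hne => ?_
    rcases Set.mem_insert_iff.1 hx with rfl | hx
    · exact hcs
    · exact (mem_filter.1 hx).2.2.1

lemma IsHitClique.disjoint_of_signs (hK : IsHitClique G C S (-a) (-σ) K)
    (hIC : ∀ x ∈ I, x ∈ C → σ x = 1) (hIS : ∀ x ∈ I, x ∈ S → σ x ≠ -1) : Disjoint I K := by
  rw [disjoint_right]
  intro x hxK hxI
  cases hK with
  | star hs hσs =>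
    simp only [mem_insert, mem_filter] at hxK
    rcases hxK with rfl | ⟨hxC, hσx, -⟩
    · exact hIS x hxI hs (by simpa using hσs)
    · simp [hIC x hxI hxC] at hσx
  | pos =>
    obtain ⟨hxC, hσx⟩ := mem_filter.1 hxK
    simp [hIC x hxI hxC] at hσx
  | extend _ hyC hσy =>
    simp only [mem_insert, mem_filter] at hxK
    rcases hxK with rfl | ⟨hxC, hσx⟩
    · simp [hIC x hxI hyC] at hσy
    · simp [hIC x hxI hxC] at hσx
  | lever _ _ hcC hσc _ hs hσs =>
    simp only [mem_insert, mem_filter] at hxK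
    rcases hxK with rfl | rfl | ⟨hxC, hσx, -⟩
    · simp [hIC x hxI hcC] at hσc
    · exact hIS x hxI hs (by simpa using hσs)
    · simp [hIC x hxI hxC] at hσx

lemma IsHitClique.not_disjoint_of_mem (hC : G.IsClique (C : Set (Fin n)))
    (hK : IsHitClique G C S a σ K) {c : Fin n} (hcI : c ∈ I) (hcC : c ∈ C) (hσc : σ c = 1)
    (hI : ∀ s ∈ S, σ s = 1 → ¬G.Adj c s → s ∈ I) : ¬Disjoint I K := by
  rw [not_disjoint_iff]
  cases hK with
  | @star s hs hσs =>
    by_cases hcs : G.Adj c s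
    · exact ⟨c, hcI, mem_insert_of_mem (by simp [hcC, hσc, hcs.symm])⟩
    · exact ⟨s, hI s hs hσs hcs, mem_insert_self _ _⟩
  | pos => exact ⟨c, hcI, by simp [hcC, hσc]⟩
  | extend => exact ⟨c, hcI, mem_insert_of_mem (by simp [hcC, hσc])⟩
  | @lever c' s _ _ hc'C hσc' _ hs hσs hc's =>
    by_cases hcs : G.Adj c s
    · have hne : c' ≠ c := by rintro rfl; simp [hσc] at hσc'
      exact ⟨c, hcI, by simp [hcC, hσc, hC hc'C hcC hne, hcs.symm]⟩
    · exact ⟨s, hI s hs hσs hcs, by simp⟩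

lemma IsHitClique.not_disjoint_of_isPure (hK : IsHitClique G C S a σ K)
    (ha : IsPure G C S a σ) (hI : ∀ s ∈ S, σ s = 1 → s ∈ I) : ¬Disjoint I K := by
  rw [not_disjoint_iff]
  cases hK with
  | @star s hs hσs => exact ⟨s, hI s hs hσs, mem_insert_self _ _⟩
  | pos h => exact absurd ha h
  | extend h => rcases ha with rfl | ⟨rfl, -⟩ <;> simp at h
  | @lever _ s _ _ _ _ _ hs hσs => exact ⟨s, hI s hs hσs, by simp⟩

lemma isStable_insert (hS : IsStable G S) {c : Fin n} {T : Finset (Fin n)} (hTS : T ⊆ S)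
    (hT : ∀ t ∈ T, ¬G.Adj c t) : IsStable G (insert c T) := by
  intro x hx y hy hxy
  rw [mem_insert] at hx hy
  rcases hx with rfl | hx <;> rcases hy with rfl | hy
  · exact G.loopless.irrefl _ hxy
  · exact hT y hy hxy
  · exact hT x hx hxy.symm
  · exact hS (hTS hx) (hTS hy) hxy

lemma admissible_of_subset (hdisj : Disjoint C S) (ha : IsPure G C S a σ) (hIS : I ⊆ S)
    (hpos : ∀ s ∈ S, σ s = 1 → s ∈ I) (hneg : ∀ s ∈ I, σ s ≠ -1) : Admissible G C S a σ I :=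
  ⟨fun _ hK => hK.not_disjoint_of_isPure ha hpos, fun _ hK => hK.disjoint_of_signs
    (fun _ hx hxC => absurd (hIS hx) (disjoint_left.1 hdisj hxC)) fun x hx _ => hneg x hx⟩

lemma admissible_insert (hdisj : Disjoint C S) (hC : G.IsClique (C : Set (Fin n)))
    {c : Fin n} (hcC : c ∈ C) (hσc : σ c = 1) {T : Finset (Fin n)} (hTS : T ⊆ S)
    (hpos : ∀ s ∈ S, σ s = 1 → ¬G.Adj c s → s ∈ T) (hneg : ∀ s ∈ T, σ s ≠ -1) :
    Admissible G C S a σ (insert c T) := by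
  refine ⟨fun _ hK => hK.not_disjoint_of_mem hC (mem_insert_self c T) hcC hσc
    fun s hs hσs hcs => mem_insert_of_mem (hpos s hs hσs hcs), fun _ hK => hK.disjoint_of_signs
    (fun x hx hxC => ?_) fun x hx hxS => ?_⟩
  · rcases mem_insert.1 hx with rfl | hx
    · exact hσc
    · exact absurd (hTS hx) (disjoint_left.1 hdisj hxC)
  · rcases mem_insert.1 hx with rfl | hx
    · exact absurd hxS (disjoint_left.1 hdisj hcC)
    · exact hneg x hx

lemma isStable_cliqueWitness (hS : IsStable G S) (σ : Fin n → SignType) (c : Fin n) :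
    IsStable G (cliqueWitness G S σ c) :=
  isStable_insert hS (filter_subset _ _) fun _ ht => (mem_filter.1 ht).2.2

lemma admissible_cliqueWitness (hdisj : Disjoint C S) (hC : G.IsClique (C : Set (Fin n)))
    {c : Fin n} (hcC : c ∈ C) (hσc : σ c = 1) : Admissible G C S a σ (cliqueWitness G S σ c) :=
  admissible_insert hdisj hC hcC hσc (filter_subset _ _)
    (fun s hs hσs hcs => mem_filter.2 ⟨hs, hσs, hcs⟩)
    fun s hs => by simp [(mem_filter.1 hs).2.1]

lemma clique_mem_cliqueWitness (hdisj : Disjoint C S) {c x : Fin n}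
    (hx : x ∈ cliqueWitness G S σ c) (hxC : x ∈ C) : x = c := by
  rcases mem_insert.1 hx with rfl | hx
  · rfl
  · exact absurd (mem_filter.1 hx).1 (disjoint_left.1 hdisj hxC)

lemma Admissible.notMem_of_neg (h : Admissible G C S a σ I) {s : Fin n} (hs : s ∈ S)
    (hσs : σ s = -1) : s ∉ I := fun hsI =>
  disjoint_left.1 (h.2 _ (.star hs (by simp [hσs]))) hsI (mem_insert_self _ _)

lemma Admissible.mem_of_pos (h : Admissible G C S a σ I) (hIC : Disjoint I C) {s : Fin n}
    (hs : s ∈ S) (hσs : σ s = 1) : s ∈ I := by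
  obtain ⟨x, hxI, hxK⟩ := not_disjoint_iff.1 (h.1 _ (.star hs hσs))
  rcases mem_insert.1 hxK with rfl | hxK
  · exact hxI
  · exact absurd (mem_filter.1 hxK).1 (disjoint_left.1 hIC hxI)

lemma Admissible.exists_clique_pos (h : Admissible G C S a σ I) (ha : ¬IsPure G C S a σ) :
    ∃ c ∈ I, c ∈ C ∧ σ c = 1 := by
  obtain ⟨x, hxI, hxK⟩ := not_disjoint_iff.1 (h.1 _ (.pos ha))
  exact ⟨x, hxI, mem_filter.1 hxK⟩

lemma Admissible.pos_of_adj_pos (hC : G.IsClique (C : Set (Fin n))) (hI : IsStable G I)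
    (h : Admissible G C S a σ I) {c s : Fin n} (hcI : c ∈ I) (hcC : c ∈ C) (hs : s ∈ S)
    (hσs : σ s = 1) (hcs : G.Adj c s) : σ c = 1 := by
  obtain ⟨x, hxI, hxK⟩ := not_disjoint_iff.1 (h.1 _ (.star hs hσs))
  rcases mem_insert.1 hxK with rfl | hxK
  · exact absurd hcs (hI hcI hxI)
  · obtain ⟨hxC, hσx, -⟩ := mem_filter.1 hxK
    obtain rfl : x = c := by
      by_contra hxc
      exact hI hxI hcI (hC hxC hcC hxc)
    exact hσx

lemma Admissible.ne_neg_of_adj_neg (h : Admissible G C S a σ I) {c s : Fin n} (hcI : c ∈ I)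
    (hcC : c ∈ C) (hσc : σ c = -1) (hs : s ∈ S) (hcs : G.Adj c s) : σ s ≠ -1 := fun hσs =>
  disjoint_left.1 (h.2 _ (.star hs (by simp [hσs]))) hcI
    (mem_insert_of_mem (by simp [hcC, hσc, hcs.symm]))

lemma Admissible.notMem_of_lever (h : Admissible G C S a σ I) (ha : a = 0)
    (hσ : Anchored G C S σ) {c s : Fin n} (hcC : c ∈ C) (hσc : σ c = 0) (hs : s ∈ S)
    (hσs : σ s = -1) (hcs : G.Adj c s) (hc : ∀ t ∈ S, G.Adj c t → σ t ≠ 1) : c ∉ I :=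
  fun hcI => disjoint_left.1 (h.2 _ (.lever (by simp [ha]) (by simpa using hσ) hcC
    (by simp [hσc]) (fun t ht hct => by simpa using hc t ht hct) hs (by simp [hσs]) hcs))
    hcI (mem_insert_self _ _)

lemma Admissible.clique_pos_of_one (h : Admissible G C S a σ I) (ha : a = 1) {c : Fin n}
    (hcI : c ∈ I) (hcC : c ∈ C) : σ c = 1 := by
  by_contra hσc
  exact disjoint_left.1 (h.2 _ (.extend (by simp [ha]) hcC (by simpa using hσc))) hcI
    (mem_insert_self _ _)

lemma admissible_posPart (hdisj : Disjoint C S) (ha : IsPure G C S a σ) :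
    Admissible G C S a σ {s ∈ S | σ s = 1} :=
  admissible_of_subset hdisj ha (filter_subset _ _) (fun s hs hσs => mem_filter.2 ⟨hs, hσs⟩)
    fun s hs => by simp [(mem_filter.1 hs).2]

lemma exists_admissible_disjoint_iff (hdisj : Disjoint C S) (hS : IsStable G S) :
    (∃ I, IsStable G I ∧ Admissible G C S a σ I ∧ Disjoint I C) ↔ IsPure G C S a σ := by
  refine ⟨fun ⟨I, _, h, hIC⟩ => ?_, fun ha => ⟨_, hS.subset (filter_subset _ _),
    admissible_posPart hdisj ha, hdisj.symm.mono_left (filter_subset _ _)⟩⟩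
  by_contra ha
  obtain ⟨c, hcI, hcC, -⟩ := h.exists_clique_pos ha
  exact disjoint_left.1 hIC hcI hcC

lemma exists_admissible (hdisj : Disjoint C S) (hC : G.IsClique (C : Set (Fin n)))
    (hS : IsStable G S) (a : SignType) (σ : Fin n → SignType) :
    ∃ I, IsStable G I ∧ (Admissible G C S a σ I ∨ Admissible G C S (-a) (-σ) I) := by
  by_cases ha : IsPure G C S a σ
  · exact ⟨_, hS.subset (filter_subset _ _), .inl (admissible_posPart hdisj ha)⟩
  by_cases ha' : IsPure G C S (-a) (-σ)
  · exact ⟨_, hS.subset (filter_subset _ _), .inr (admissible_posPart hdisj ha')⟩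
  have hna : ¬Anchored G C S σ := by
    intro hσ
    rcases a.trichotomy with rfl | rfl | rfl
    · exact ha' (Or.inl (neg_neg _))
    · exact ha (Or.inr ⟨rfl, hσ⟩)
    · exact ha (Or.inl rfl)
  simp only [Anchored, not_forall] at hna
  obtain ⟨c, hcC, hσc, -⟩ := hna
  rcases (σ c).trichotomy with hσc' | hσc' | hσc'
  · exact ⟨_, isStable_cliqueWitness hS (-σ) c,
      .inr (admissible_cliqueWitness hdisj hC hcC (by simp [hσc']))⟩
  · exact absurd hσc' hσc
  · exact ⟨_, isStable_cliqueWitness hS σ c, .inl (admissible_cliqueWitness hdisj hC hcC hσc')⟩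




variable (G C S) in
def SameFaces (a : SignType) (σ : Fin n → SignType) (b : SignType) (ρ : Fin n → SignType) :
    Prop :=
  ∀ I, IsStable G I → (Admissible G C S a σ I ↔ Admissible G C S b ρ I) ∧
    (Admissible G C S (-a) (-σ) I ↔ Admissible G C S (-b) (-ρ) I)

namespace SameFaces

lemma symm (h : SameFaces G C S a σ b ρ) : SameFaces G C S b ρ a σ :=
  fun I hI => ⟨(h I hI).1.symm, (h I hI).2.symm⟩

lemma neg (h : SameFaces G C S a σ b ρ) : SameFaces G C S (-a) (-σ) (-b) (-ρ) :=
  fun I hI => ⟨(h I hI).2, by simpa only [neg_neg] using (h I hI).1⟩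

lemma isPure_iff (hdisj : Disjoint C S) (hS : IsStable G S) (h : SameFaces G C S a σ b ρ) :
    IsPure G C S a σ ↔ IsPure G C S b ρ := by
  rw [← exists_admissible_disjoint_iff hdisj hS, ← exists_admissible_disjoint_iff hdisj hS]
  exact exists_congr fun I => ⟨fun ⟨hI, hA, hD⟩ => ⟨hI, (h I hI).1.1 hA, hD⟩,
    fun ⟨hI, hA, hD⟩ => ⟨hI, (h I hI).1.2 hA, hD⟩⟩

lemma eq_and_anchored_iff (hdisj : Disjoint C S) (hS : IsStable G S)
    (h : SameFaces G C S a σ b ρ) : a = b ∧ (a = 0 → (Anchored G C S σ ↔ Anchored G C S ρ)) := by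
  have h₁ := h.isPure_iff hdisj hS
  have h₂ := h.neg.isPure_iff hdisj hS
  simp only [IsPure, SignType.neg_eq_one_iff, anchored_neg] at h₁ h₂
  generalize Anchored G C S σ = p at h₁ h₂
  generalize Anchored G C S ρ = q at h₁ h₂
  rcases a.trichotomy with rfl | rfl | rfl <;> rcases b.trichotomy with rfl | rfl | rfl <;>
    simp_all

lemma pos_of_pos_of_isPure (hdisj : Disjoint C S) (hS : IsStable G S)
    (h : SameFaces G C S a σ b ρ) (hb : IsPure G C S b ρ) {s : Fin n} (hs : s ∈ S)
    (hσs : σ s = 1) : ρ s = 1 := by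
  have hadm := (h _ (hS.subset (filter_subset _ _))).1.2 (admissible_posPart hdisj hb)
  exact (mem_filter.1 (hadm.mem_of_pos (hdisj.symm.mono_left (filter_subset _ _)) hs hσs)).2

lemma neg_of_neg_of_isPure (hdisj : Disjoint C S) (hS : IsStable G S)
    (h : SameFaces G C S a σ b ρ) (hb : IsPure G C S b ρ) {s : Fin n} (hs : s ∈ S)
    (hσs : σ s = -1) : ρ s = -1 := by
  by_contra hρs
  have hIS : insert s {t ∈ S | ρ t = 1} ⊆ S := insert_subset hs (filter_subset _ _)
  have hadm : Admissible G C S b ρ (insert s {t ∈ S | ρ t = 1}) := by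
    refine admissible_of_subset hdisj hb hIS (fun t ht hρt => mem_insert_of_mem
      (mem_filter.2 ⟨ht, hρt⟩)) fun t ht => ?_
    rcases mem_insert.1 ht with rfl | ht
    · exact hρs
    · simp [(mem_filter.1 ht).2]
  exact ((h _ (hS.subset hIS)).1.2 hadm).notMem_of_neg hs hσs (mem_insert_self _ _)

lemma eq_on_stable (hdisj : Disjoint C S) (hS : IsStable G S) (h : SameFaces G C S a σ b ρ)
    (ha : IsPure G C S a σ ∨ IsPure G C S (-a) (-σ)) : ∀ s ∈ S, σ s = ρ s := by
  have key {a b σ ρ} (h : SameFaces G C S a σ b ρ) (ha : IsPure G C S a σ) (s) (hs : s ∈ S) :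
      σ s = ρ s :=
    have hb := (h.isPure_iff hdisj hS).1 ha
    SignType.eq_of_imp (h.pos_of_pos_of_isPure hdisj hS hb hs)
      (h.symm.pos_of_pos_of_isPure hdisj hS ha hs) (h.neg_of_neg_of_isPure hdisj hS hb hs)
      (h.symm.neg_of_neg_of_isPure hdisj hS ha hs)
  rcases ha with ha | ha
  · exact key h ha
  · exact fun s hs => neg_inj.1 (key h.neg ha s hs)

lemma clique_pos_of_pos_of_not_anchored (hdisj : Disjoint C S)
    (hC : G.IsClique (C : Set (Fin n))) (hS : IsStable G S) (h : SameFaces G C S a σ b ρ)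
    (hb : ¬(b = 0 ∧ Anchored G C S ρ)) {c : Fin n} (hcC : c ∈ C) (hσc : σ c = 1) : ρ c = 1 := by
  have hadm := (h _ (isStable_cliqueWitness hS σ c)).1.1
    (admissible_cliqueWitness hdisj hC hcC hσc)
  by_cases hb₁ : b = 1
  · exact hadm.clique_pos_of_one hb₁ (mem_insert_self _ _) hcC
  · obtain ⟨x, hxI, hxC, hρx⟩ := hadm.exists_clique_pos fun hb' => by
      rcases hb' with hb' | hb'
      exacts [hb₁ hb', hb hb']
    rwa [← clique_mem_cliqueWitness hdisj hxI hxC]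

lemma clique_pos_of_pos_of_anchored (hdisj : Disjoint C S)
    (hC : G.IsClique (C : Set (Fin n))) (hS : IsStable G S) (h : SameFaces G C S a σ b ρ)
    (hb : b = 0) (hσ : Anchored G C S σ) (hρ : Anchored G C S ρ)
    (hSeq : ∀ s ∈ S, σ s = ρ s) {c : Fin n} (hcC : c ∈ C) (hσc : σ c = 1) : ρ c = 1 := by
  have hI := isStable_cliqueWitness hS σ c
  have hadm := (h _ hI).1.1 (admissible_cliqueWitness hdisj hC hcC hσc)
  have hcI : c ∈ cliqueWitness G S σ c := mem_insert_self _ _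
  by_cases hpos : ∃ s ∈ S, ρ s = 1 ∧ G.Adj c s
  · obtain ⟨s, hs, hρs, hcs⟩ := hpos
    exact hadm.pos_of_adj_pos hC hI hcI hcC hs hρs hcs
  push Not at hpos
  obtain ⟨s, hs, hσs, hcs⟩ := hσ c hcC (by simp [hσc])
  have hρs : ρ s = -1 := by
    rcases (ρ s).trichotomy with hρs | hρs | hρs
    · exact hρs
    · exact absurd (hSeq s hs ▸ hρs) hσs
    · exact absurd hcs (hpos s hs hρs)
  by_contra hρc
  rcases (ρ c).trichotomy with hρc' | hρc' | hρc'
  · exact hadm.ne_neg_of_adj_neg hcI hcC hρc' hs hcs hρs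
  · exact hadm.notMem_of_lever hb hρ hcC hρc' hs hρs hcs
      (fun t ht hct hρt => hpos t ht hρt hct) hcI
  · exact hρc hρc'

lemma eq_on_clique (hdisj : Disjoint C S) (hC : G.IsClique (C : Set (Fin n)))
    (hS : IsStable G S) (h : SameFaces G C S a σ b ρ)
    (hSeq : a = 0 ∧ Anchored G C S σ → ∀ s ∈ S, σ s = ρ s) : ∀ c ∈ C, σ c = ρ c := by
  have key {a b σ ρ} (h : SameFaces G C S a σ b ρ)
      (hSeq : a = 0 ∧ Anchored G C S σ → ∀ s ∈ S, σ s = ρ s) (c) (hcC : c ∈ C) (hσc : σ c = 1) :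
      ρ c = 1 := by
    obtain ⟨rfl, hanch⟩ := h.eq_and_anchored_iff hdisj hS
    by_cases hb : a = 0 ∧ Anchored G C S ρ
    · have hσ := (hanch hb.1).2 hb.2
      exact h.clique_pos_of_pos_of_anchored hdisj hC hS hb.1 hσ hb.2 (hSeq ⟨hb.1, hσ⟩) hcC hσc
    · exact h.clique_pos_of_pos_of_not_anchored hdisj hC hS hb hcC hσc
  obtain ⟨rfl, hanch⟩ := h.eq_and_anchored_iff hdisj hS
  have hSeq' : a = 0 ∧ Anchored G C S ρ → ∀ s ∈ S, ρ s = σ s := fun ha s hs =>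
    (hSeq ⟨ha.1, (hanch ha.1).2 ha.2⟩ s hs).symm
  intro c hcC
  refine SignType.eq_of_imp (key h hSeq c hcC) (key h.symm hSeq' c hcC) (fun hσc => ?_)
    fun hρc => ?_
  · simpa using key h.neg (fun ha s hs => by simpa using hSeq (by simpa using ha) s hs) c hcC
      (by simp [hσc])
  · simpa using key h.neg.symm (fun ha s hs => by simpa using hSeq' (by simpa using ha) s hs) c
      hcC (by simp [hρc])

lemma stable_pos_of_pos_of_not_anchored (hdisj : Disjoint C S)
    (hC : G.IsClique (C : Set (Fin n))) (hS : IsStable G S) (h : SameFaces G C S a σ b ρ)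
    (hσ : ¬Anchored G C S σ) (hCeq : ∀ c ∈ C, σ c = ρ c) {s : Fin n} (hs : s ∈ S)
    (hσs : σ s = 1) : ρ s = 1 := by
  simp only [Anchored, not_forall, not_exists, not_and] at hσ
  obtain ⟨c, hcC, hσc, hc⟩ := hσ
  have hcs : ¬G.Adj c s := hc s hs (by simp [hσs])
  rcases (σ c).trichotomy with hσc' | hσc' | hσc'
  · by_contra hρs
    set J := insert c {t ∈ S | ρ t ≠ 1 ∧ ¬G.Adj c t}
    have hJ : IsStable G J :=
      isStable_insert hS (filter_subset _ _) fun t ht => (mem_filter.1 ht).2.2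
    have hadm : Admissible G C S (-b) (-ρ) J :=
      admissible_insert hdisj hC hcC (by simp [← hCeq c hcC, hσc']) (filter_subset _ _)
        (fun t ht hρt hct => mem_filter.2 ⟨ht, by simp_all⟩)
        fun t ht => by simpa using (mem_filter.1 ht).2.1
    exact ((h J hJ).2.2 hadm).notMem_of_neg hs (by simp [hσs])
      (mem_insert_of_mem (mem_filter.2 ⟨hs, hρs, hcs⟩))
  · exact absurd hσc' hσc
  · have hI := isStable_cliqueWitness hS ρ c
    have hadm := (h _ hI).1.2 (admissible_cliqueWitness hdisj hC hcC (hCeq c hcC ▸ hσc'))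
    obtain ⟨x, hxI, hxK⟩ := not_disjoint_iff.1 (hadm.1 _ (.star hs hσs))
    rcases mem_insert.1 hxK with rfl | hxK
    · rcases mem_insert.1 hxI with rfl | hx
      · exact absurd hs (disjoint_left.1 hdisj hcC)
      · exact (mem_filter.1 hx).2.1
    · obtain ⟨hxC, -, hsx⟩ := mem_filter.1 hxK
      obtain rfl := clique_mem_cliqueWitness hdisj hxI hxC
      exact absurd hsx.symm hcs

theorem eq (hdisj : Disjoint C S) (hcover : C ∪ S = univ) (hC : G.IsClique (C : Set (Fin n)))
    (hS : IsStable G S) (h : SameFaces G C S a σ b ρ) : a = b ∧ σ = ρ := by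
  obtain ⟨rfl, hanch⟩ := h.eq_and_anchored_iff hdisj hS
  have hsigns : (∀ c ∈ C, σ c = ρ c) ∧ ∀ s ∈ S, σ s = ρ s := by
    by_cases hp : IsPure G C S a σ ∨ IsPure G C S (-a) (-σ)
    · have hSeq := h.eq_on_stable hdisj hS hp
      exact ⟨h.eq_on_clique hdisj hC hS fun _ => hSeq, hSeq⟩
    · obtain ⟨ha, hσ⟩ : a = 0 ∧ ¬Anchored G C S σ := by
        simp only [IsPure, SignType.neg_eq_one_iff, anchored_neg, not_or, not_and] at hp
        rcases a.trichotomy with rfl | rfl | rfl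
        · exact absurd rfl hp.2.1
        · exact ⟨rfl, hp.1.2 rfl⟩
        · exact absurd rfl hp.1.1
      have hρ : ¬Anchored G C S ρ := fun hρ => hσ ((hanch ha).2 hρ)
      have hCeq := h.eq_on_clique hdisj hC hS fun h' => absurd h'.2 hσ
      refine ⟨hCeq, fun s hs => SignType.eq_of_imp ?_ ?_ ?_ ?_⟩
      · exact h.stable_pos_of_pos_of_not_anchored hdisj hC hS hσ hCeq hs
      · exact h.symm.stable_pos_of_pos_of_not_anchored hdisj hC hS hρ
          (fun c hc => (hCeq c hc).symm) hs
      · intro hσs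
        simpa using h.neg.stable_pos_of_pos_of_not_anchored hdisj hC hS (by simpa using hσ)
          (fun c hc => by simp [hCeq c hc]) hs (by simp [hσs])
      · intro hρs
        simpa using h.neg.symm.stable_pos_of_pos_of_not_anchored hdisj hC hS (by simpa using hρ)
          (fun c hc => by simp [hCeq c hc]) hs (by simp [hρs])
  refine ⟨rfl, funext fun v => ?_⟩
  rcases mem_union.1 (hcover ▸ mem_univ v) with hv | hv
  exacts [hsigns.1 v hv, hsigns.2 v hv]

end SameFaces

lemma mem_splitFace_iff (hdisj : Disjoint C S) (hC : G.IsClique (C : Set (Fin n)))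
    (hS : IsStable G S) (hI : IsStable G I) :
    (hansenVert I ∈ splitFace G C S a σ ↔ Admissible G C S a σ I) ∧
      (-hansenVert I ∈ splitFace G C S a σ ↔ Admissible G C S (-a) (-σ) I) := by
  have hcl {a σ} : ∀ K ∈ hitFamily G C S a σ, G.IsClique (K : Set (Fin n)) := fun K hK =>
    (mem_filter.1 hK).2.isClique hC
  have hsep {J} : Separates (hitFamily G C S (-a) (-σ)) (hitFamily G C S a σ) J ↔
      Admissible G C S (-a) (-σ) J := by
    simpa only [neg_neg] using separates_hitFamily_iff (a := -a) (σ := -σ)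
  obtain ⟨J, hJ, hJa⟩ := exists_admissible hdisj hC hS a σ
  have := mem_familyFace_iff hcl hcl
    ⟨J, hJ, hJa.imp separates_hitFamily_iff.2 hsep.2⟩ hI
  exact ⟨this.1.trans separates_hitFamily_iff, this.2.trans hsep⟩

lemma splitFace_nonempty (hdisj : Disjoint C S) (hC : G.IsClique (C : Set (Fin n)))
    (hS : IsStable G S) (a : SignType) (σ : Fin n → SignType) :
    (splitFace G C S a σ).Nonempty := by
  obtain ⟨J, hJ, hJa | hJa⟩ := exists_admissible hdisj hC hS a σ
  exacts [⟨_, (mem_splitFace_iff hdisj hC hS hJ).1.2 hJa⟩,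
    ⟨_, (mem_splitFace_iff hdisj hC hS hJ).2.2 hJa⟩]

lemma splitFace_injective (hdisj : Disjoint C S) (hcover : C ∪ S = univ)
    (hC : G.IsClique (C : Set (Fin n))) (hS : IsStable G S) :
    Function.Injective fun p : SignType × (Fin n → SignType) => splitFace G C S p.1 p.2 := by
  rintro ⟨a, σ⟩ ⟨b, ρ⟩ hF
  have h : SameFaces G C S a σ b ρ := fun I hI => by
    have h₁ := mem_splitFace_iff hdisj hC hS (a := a) (σ := σ) hI
    have h₂ := mem_splitFace_iff hdisj hC hS (a := b) (σ := ρ) hI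
    simp only at hF
    rw [hF] at h₁
    exact ⟨h₁.1.symm.trans h₂.1, h₁.2.symm.trans h₂.2⟩
  obtain ⟨rfl, rfl⟩ := h.eq hdisj hcover hC hS
  rfl

end SplitGraph

end Hansen

open Hansen in
/-- Kalai's `3^d`-conjecture holds for Hansen polytopes of split graphs: if `G` is a
split graph on `d − 1` vertices (`d = n + 1`), then `H(G) ⊆ ℝ^d` has at least `3^d`
nonempty faces. -/
theorem hansen_split_3d_conjecture {n : ℕ} (G : SimpleGraph (Fin n))
    (C S : Finset (Fin n)) (hdisj : Disjoint C S) (hcover : C ∪ S = Finset.univ)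
    (hC : G.IsClique (↑C : Set (Fin n))) (hS : IsStable G S) :
    3 ^ (n + 1) ≤ numFaces (hansenPolytope G) := by
  have hfaces : {F | IsExposed ℝ (hansenPolytope G) F ∧ F.Nonempty}.Finite :=
    (vertices_finite G).setOf_isExposed_convexHull.subset fun _ hF => hF.1
  calc 3 ^ (n + 1) = Nat.card (SignType × (Fin n → SignType)) := by
        simp [Nat.card_eq_fintype_card, pow_succ', show Fintype.card SignType = 3 from rfl]
    _ = (Set.range fun p : SignType × (Fin n → SignType) => splitFace G C S p.1 p.2).ncard :=
        (Set.ncard_range_of_injective (splitFace_injective hdisj hcover hC hS)).symm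
    _ ≤ numFaces (hansenPolytope G) := by
        refine Set.ncard_le_ncard ?_ hfaces
        rintro _ ⟨⟨a, σ⟩, rfl⟩
        exact ⟨ContinuousLinearMap.toExposed.isExposed, splitFace_nonempty hdisj hC hS a σ⟩
end
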